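/- (Markovian structure of discounted BSDE solutions) Let α > 0, let X be a Markov chain with transition matrices A_t, and let f be a Markovian driver, f(ω,t,z) = f̃(X_t(ω),t,z), independent of y, which is Lipschitz in z, satisfies the comparison condition of the change-of-measure proposition, and has |f(ω,t,0)| uniformly bounded. Let (Y,Z) be the unique bounded adapted solution of the discounted BSDE Y_T = Y_t − Σ_{t≤u<T}(f(ω,u,Z_u) − αY_u) + Σ_{t≤u<T} Z_uᵀM_{u+1} (for all 0 ≤ t < T). Then there exists a deterministic function v : ℕ × S → ℝ such that for all t, Y_t = v(t,X_t) a.s. and Z_t may be chosen (within its ∼_{M_{t+1}}-class) with e_kᵀZ_t = v(t+1,e_k) for all e_k ∈ S. Moreover, writing v_{t+1} ∈ ℝ^N for the vector with entries e_kᵀv_{t+1} = v(t+1,e_k), one has (1+α)v(t,e_k) − f̃(e_k,t,v_{t+1}) − v_{t+1}ᵀA_te_k = 0 for all t and all e_k ∈ S with P(X_t = e_k) > 0. -/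

import Mathlib

open MeasureTheory Finset Filter

noncomputable section

namespace DiscreteEBSDE

variable {Ω : Type*} {mΩ : MeasurableSpace Ω} {N : ℕ}

/-- The standard basis vector `e i` of `ℝ^N`. -/
def e (N : ℕ) (i : Fin N) : Fin N → ℝ := Pi.single i 1

/-- The Euclidean inner product on `ℝ^N`. -/
def dotR {N : ℕ} (z w : Fin N → ℝ) : ℝ := ∑ i, z i * w i

/-- The process `X` takes values in the standard basis of `ℝ^N`. -/
def BasisValued (X : ℕ → Ω → (Fin N → ℝ)) : Prop := ∀ t ω, ∃ i, X t ω = e N i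

/-- The σ-algebra generated by `X 0, …, X t`. -/
def natSigma (X : ℕ → Ω → (Fin N → ℝ)) (t : ℕ) : MeasurableSpace Ω :=
  ⨆ s ∈ Set.Iic t, MeasurableSpace.comap (X s) inferInstance

/-- `F` is the `P`-completion of the natural filtration of `X`:
a set is `F t`-measurable iff it agrees with a set of the natural σ-algebra up to a
`P`-null symmetric difference. -/
def IsCompletedNaturalFiltration (P : Measure Ω) (X : ℕ → Ω → (Fin N → ℝ))
    (F : Filtration ℕ mΩ) : Prop :=
  ∀ (t : ℕ) (A : Set Ω), MeasurableSet[F t] A ↔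
    ∃ B : Set Ω, MeasurableSet[natSigma X t] B ∧ P (symmDiff A B) = 0

/-- The martingale difference `M (t+1) = X (t+1) - E[X (t+1) | F t]` (componentwise). -/
def Mdiff (P : Measure Ω) (F : Filtration ℕ mΩ) (X : ℕ → Ω → (Fin N → ℝ)) (t : ℕ)
    (ω : Ω) : Fin N → ℝ :=
  fun i => X (t + 1) ω i - (P[(fun ω' => X (t + 1) ω' i)|F t]) ω

/-- The conditional second moment `‖Z‖²_{M_{t+1}} = E[(Zᵀ M_{t+1})² | F t]`. -/
def seminormSq (P : Measure Ω) (F : Filtration ℕ mΩ) (X : ℕ → Ω → (Fin N → ℝ))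
    (t : ℕ) (Z : Ω → Fin N → ℝ) : Ω → ℝ :=
  P[(fun ω => (dotR (Z ω) (Mdiff P F X t ω)) ^ 2)|F t]

/-- The stochastic seminorm `‖Z‖_{M_{t+1}}`. -/
def mSeminorm (P : Measure Ω) (F : Filtration ℕ mΩ) (X : ℕ → Ω → (Fin N → ℝ))
    (t : ℕ) (Z : Ω → Fin N → ℝ) (ω : Ω) : ℝ :=
  Real.sqrt (seminormSq P F X t Z ω)

/-- `Z ∼_{M_{t+1}} Z'`, i.e. `‖Z - Z'‖_{M_{t+1}} = 0` a.s. -/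
def equivMt (P : Measure Ω) (F : Filtration ℕ mΩ) (X : ℕ → Ω → (Fin N → ℝ)) (t : ℕ)
    (Z Z' : Ω → Fin N → ℝ) : Prop :=
  seminormSq P F X t (fun ω => Z ω - Z' ω) =ᵐ[P] 0

/-- `Z ∼_M Z'`. -/
def equivM (P : Measure Ω) (F : Filtration ℕ mΩ) (X : ℕ → Ω → (Fin N → ℝ))
    (Z Z' : ℕ → Ω → Fin N → ℝ) : Prop :=
  ∀ t, equivMt P F X t (Z t) (Z' t)

/-- A driver `f(ω,t,y,z)` is adapted if `(ω,y,z) ↦ f(ω,t,y,z)` is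
`F t ⊗ B(ℝ) ⊗ B(ℝ^N)`-measurable for every `t`. -/
def DriverAdapted (F : Filtration ℕ mΩ) (f : Ω → ℕ → ℝ → (Fin N → ℝ) → ℝ) : Prop :=
  ∀ t : ℕ, Measurable[(F t).prod inferInstance]
    fun p : Ω × (ℝ × (Fin N → ℝ)) => f p.1 t p.2.1 p.2.2

/-- A column-stochastic transition matrix. -/
def IsTransMat {n : ℕ} (A : Matrix (Fin n) (Fin n) ℝ) : Prop :=
  (∀ i j, 0 ≤ A i j) ∧ ∀ j, ∑ i, A i j = 1

/-- `X` is a Markov chain with transition matrices `A t`; since `X` is valued in the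
standard basis this is equivalent to `E[X (t+1) | F t] = (A t) (X t)` a.s. -/
def IsMarkovChain (P : Measure Ω) (F : Filtration ℕ mΩ) (X : ℕ → Ω → (Fin N → ℝ))
    (A : ℕ → Matrix (Fin N) (Fin N) ℝ) : Prop :=
  (∀ t, IsTransMat (A t)) ∧
    ∀ (t : ℕ) (i : Fin N),
      (P[(fun ω => X (t + 1) ω i)|F t]) =ᵐ[P] fun ω => (A t).mulVec (X t ω) i

/-- The atom of `F t` containing `ω₀` (the set of paths agreeing with `ω₀` up to time `t`). -/
def pathAtom (X : ℕ → Ω → (Fin N → ℝ)) (t : ℕ) (ω₀ : Ω) : Set Ω :=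
  {ω' | ∀ s ≤ t, X s ω' = X s ω₀}

/-- `min_{i ∈ J_t^F} (z - z')ᵀ(e_i - E[X_{t+1} | F_t])` where `F` is the atom of `ω₀`
 at time `t` and `J_t^F = {i : P(X_{t+1} = e_i | F) > 0}`. -/
def minJump (P : Measure Ω) (F : Filtration ℕ mΩ) (X : ℕ → Ω → (Fin N → ℝ))
    (t : ℕ) (ω₀ : Ω) (z z' : Fin N → ℝ) (ω : Ω) : ℝ :=
  sInf {r : ℝ | ∃ i : Fin N,
    0 < P ({ω' | X (t + 1) ω' = e N i} ∩ pathAtom X t ω₀) ∧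
    r = dotR (z - z') (fun j => e N i j - (P[(fun ω'' => X (t + 1) ω'' j)|F t]) ω)}

/-- The comparison condition of the change-of-measure proposition: on every atom `F` of
`F t`, `f(ω,t,y,z) - f(ω,t,y,z') > min_{i ∈ J_t^F}{(z-z')ᵀ(e_i - E[X_{t+1}|F_t])}`, unless
this minimum is `0`, in which case equality holds. -/
def ComparisonCondition (P : Measure Ω) (F : Filtration ℕ mΩ) (X : ℕ → Ω → (Fin N → ℝ))
    (f : Ω → ℕ → ℝ → (Fin N → ℝ) → ℝ) : Prop :=
  ∀ (t : ℕ) (y : ℝ) (z z' : Fin N → ℝ) (ω₀ : Ω), 0 < P (pathAtom X t ω₀) →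
    ∀ᵐ ω ∂P, ω ∈ pathAtom X t ω₀ →
      (minJump P F X t ω₀ z z' ω = 0 → f ω t y z - f ω t y z' = 0) ∧
      (minJump P F X t ω₀ z z' ω ≠ 0 →
        minJump P F X t ω₀ z z' ω < f ω t y z - f ω t y z')

/-- `f` is Lipschitz in `z` with constant `L`, w.r.t. the stochastic seminorm. -/
def DriverLipschitzNoY (P : Measure Ω) (F : Filtration ℕ mΩ) (X : ℕ → Ω → (Fin N → ℝ))
    (L : ℝ) (f : Ω → ℕ → (Fin N → ℝ) → ℝ) : Prop :=
  ∀ (t : ℕ) (Zt Z't : Ω → Fin N → ℝ),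
    StronglyMeasurable[F t] Zt → StronglyMeasurable[F t] Z't →
    ∀ᵐ ω ∂P, |f ω t (Zt ω) - f ω t (Z't ω)| ≤
      L * mSeminorm P F X t (fun ω' => Zt ω' - Z't ω') ω

/-- `(Y,Z)` is an adapted solution of the finite horizon BSDE with driver `f`,
horizon `T` and terminal condition `ξ`. -/
def SolvesFiniteBSDE (P : Measure Ω) (F : Filtration ℕ mΩ) (X : ℕ → Ω → (Fin N → ℝ))
    (f : Ω → ℕ → ℝ → (Fin N → ℝ) → ℝ) (T : ℕ) (ξ : Ω → ℝ)
    (Y : ℕ → Ω → ℝ) (Z : ℕ → Ω → Fin N → ℝ) : Prop :=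
  Adapted F Y ∧ Adapted F Z ∧
    ∀ t ≤ T, ∀ᵐ ω ∂P,
      Y t ω - ∑ u ∈ Finset.Ico t T, f ω u (Y u ω) (Z u ω) +
        ∑ u ∈ Finset.Ico t T, dotR (Z u ω) (Mdiff P F X u ω) = ξ ω

/-- `(Y,Z)` is an adapted solution of the infinite-horizon discounted BSDE
with discount rate `α` and driver `f` (independent of `y`). -/
def SolvesDiscountedBSDE (P : Measure Ω) (F : Filtration ℕ mΩ) (X : ℕ → Ω → (Fin N → ℝ))
    (α : ℝ) (f : Ω → ℕ → (Fin N → ℝ) → ℝ)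
    (Y : ℕ → Ω → ℝ) (Z : ℕ → Ω → Fin N → ℝ) : Prop :=
  Adapted F Y ∧ Adapted F Z ∧
    ∀ t T : ℕ, t < T → ∀ᵐ ω ∂P,
      Y T ω = Y t ω - ∑ u ∈ Finset.Ico t T, (f ω u (Z u ω) - α * Y u ω) +
        ∑ u ∈ Finset.Ico t T, dotR (Z u ω) (Mdiff P F X u ω)

/-- `(Y,Z,lam)` solves the Ergodic BSDE with Markovian driver `f`. -/
def SolvesEBSDE (P : Measure Ω) (F : Filtration ℕ mΩ) (X : ℕ → Ω → (Fin N → ℝ))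
    (f : (Fin N → ℝ) → (Fin N → ℝ) → ℝ) (Y : ℕ → Ω → ℝ) (Z : ℕ → Ω → Fin N → ℝ)
    (lam : ℝ) : Prop :=
  ∀ t T : ℕ, t < T → ∀ᵐ ω ∂P,
    Y T ω = Y t ω - ∑ u ∈ Finset.Ico t T, (f (X u ω) (Z u ω) - lam) +
      ∑ u ∈ Finset.Ico t T, dotR (Z u ω) (Mdiff P F X u ω)

/-- Ratio with the convention `0/0 := 1`. -/
def balRatio (a b : ℝ) : ℝ := if a = 0 ∧ b = 0 then 1 else a / b

/-- The driver `f(ω,t,y,z)` is `γ`-balanced. -/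
def IsGammaBalanced (P : Measure Ω) (F : Filtration ℕ mΩ) (X : ℕ → Ω → (Fin N → ℝ))
    (A : ℕ → Matrix (Fin N) (Fin N) ℝ) (γ : ℝ)
    (f : Ω → ℕ → ℝ → (Fin N → ℝ) → ℝ) : Prop :=
  ∃ ψ : Ω → ℕ → (Fin N → ℝ) → (Fin N → ℝ) → (Fin N → ℝ),
    (∀ t : ℕ, Measurable[(F t).prod inferInstance]
      fun p : Ω × ((Fin N → ℝ) × (Fin N → ℝ)) => ψ p.1 t p.2.1 p.2.2) ∧
    ∀ (t : ℕ) (y : ℝ) (z z' : Fin N → ℝ), ∀ᵐ ω ∂P,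
      f ω t y z - f ω t y z' =
          dotR (z - z') (fun i => ψ ω t z z' i - (A t).mulVec (X t ω) i) ∧
        (∀ i, balRatio (ψ ω t z z' i) ((A t).mulVec (X t ω) i) ∈ Set.Icc γ γ⁻¹) ∧
        ∑ i, ψ ω t z z' i = 1

/-- The driver `f(ω,t,z)` (independent of `y`) is `γ`-balanced. -/
def IsGammaBalancedNoY (P : Measure Ω) (F : Filtration ℕ mΩ) (X : ℕ → Ω → (Fin N → ℝ))
    (A : ℕ → Matrix (Fin N) (Fin N) ℝ) (γ : ℝ)
    (f : Ω → ℕ → (Fin N → ℝ) → ℝ) : Prop :=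
  ∃ ψ : Ω → ℕ → (Fin N → ℝ) → (Fin N → ℝ) → (Fin N → ℝ),
    (∀ t : ℕ, Measurable[(F t).prod inferInstance]
      fun p : Ω × ((Fin N → ℝ) × (Fin N → ℝ)) => ψ p.1 t p.2.1 p.2.2) ∧
    ∀ (t : ℕ) (z z' : Fin N → ℝ), ∀ᵐ ω ∂P,
      f ω t z - f ω t z' =
          dotR (z - z') (fun i => ψ ω t z z' i - (A t).mulVec (X t ω) i) ∧
        (∀ i, balRatio (ψ ω t z z' i) ((A t).mulVec (X t ω) i) ∈ Set.Icc γ γ⁻¹) ∧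
        ∑ i, ψ ω t z z' i = 1

/-- A probability vector on `Fin n`. -/
def IsProbVec {n : ℕ} (μ : Fin n → ℝ) : Prop := (∀ i, 0 ≤ μ i) ∧ ∑ i, μ i = 1

/-- Total variation distance between (signed) measures on a finite state space. -/
def tvDist {n : ℕ} (μ ν : Fin n → ℝ) : ℝ := (∑ x, |μ x - ν x|) / 2

/-- Uniform ergodicity of the chain induced by the column-stochastic matrix `A`. -/
def UniformlyErgodic {n : ℕ} (A : Matrix (Fin n) (Fin n) ℝ) : Prop :=
  ∃ π : Fin n → ℝ, IsProbVec π ∧ ∃ R ρ : ℝ, 0 < R ∧ 0 < ρ ∧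
    ∀ (t : ℕ) (μ : Fin n → ℝ), IsProbVec μ →
      tvDist ((A ^ t).mulVec μ) π ≤ R * Real.exp (-ρ * t)

/-!
An `F t`-measurable random variable is a.s. constant on every atom `{X 0, …, X t fixed}` of
positive probability, and almost every path lies in such an atom. If `y`, `z` are the values of
`Y t`, `Z t` on an atom where the chain sits at `x`, one step of the BSDE shows that `Y (t + 1)`
equals `(1 + α) y - f(x, z) + zᵀ(e j - A t x)` on the sub-atom where `X (t + 1) = e j`.
If two atoms with the same current state carried values `y₀ > y₁`, the comparison condition
provides a successor state along which the gap is multiplied by at least `1 + α`; iterating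
contradicts the boundedness of `Y`. So `Y t` depends only on `X t`, which defines `v`. The
one-step formula then says that `z - v (t + 1)` is constant on the support of `A t x`, hence
`Z t ∼ v (t + 1)`, the comparison condition gives `f(x, z) = f(x, v (t + 1))`, and averaging the
formula against `A t x` gives the equation for `v`.
-/

open Matrix

lemma dotR_eq_dotProduct (z w : Fin N → ℝ) : dotR z w = z ⬝ᵥ w := rfl

lemma e_injective : Function.Injective (e N) := fun i j h => by
  simpa [e, Pi.single_apply, eq_comm] using congrFun h i

lemma dotProduct_e (z : Fin N → ℝ) (i : Fin N) : z ⬝ᵥ e N i = z i := by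
  simp [e]

lemma isProbVec_e (i : Fin N) : IsProbVec (e N i) :=
  ⟨fun j => by simp only [e, Pi.single_apply]; split_ifs <;> norm_num, by simp [e]⟩

lemma IsTransMat.isProbVec_mulVec {A : Matrix (Fin N) (Fin N) ℝ} (hA : IsTransMat A)
    {x : Fin N → ℝ} (hx : IsProbVec x) : IsProbVec (A *ᵥ x) := by
  simp only [IsProbVec, Matrix.mulVec, dotProduct]
  refine ⟨fun i => Finset.sum_nonneg fun j _ => mul_nonneg (hA.1 i j) (hx.1 j), ?_⟩
  rw [Finset.sum_comm]
  simp [← Finset.sum_mul, hA.2, hx.2]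

lemma IsProbVec.exists_pos {a : Fin N → ℝ} (ha : IsProbVec a) : ∃ i, 0 < a i := by
  by_contra! h
  have := Finset.sum_nonpos fun i (_ : i ∈ Finset.univ) => h i
  linarith [ha.2]

lemma IsProbVec.dotProduct_eq_of_eq_on_support {a d : Fin N → ℝ} (ha : IsProbVec a) {c : ℝ}
    (hd : ∀ i, 0 < a i → d i = c) : d ⬝ᵥ a = c := by
  calc d ⬝ᵥ a = ∑ i, c * a i := Finset.sum_congr rfl fun i _ => by
        rcases (ha.1 i).lt_or_eq with h | h
        · rw [hd i h]
        · rw [← h, mul_zero, mul_zero]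
    _ = c := by rw [← Finset.mul_sum, ha.2, mul_one]

lemma IsProbVec.dotR_sub_eq_zero {a z w : Fin N → ℝ} (ha : IsProbVec a) {c : ℝ}
    (h : ∀ j, 0 < a j → w j - z j = c) {i : Fin N} (hi : 0 < a i) :
    dotR (z - w) (e N i - a) = 0 := by
  have hconst := ha.dotProduct_eq_of_eq_on_support (d := z - w) fun j hj => by
    rw [Pi.sub_apply, ← neg_sub, h j hj]
  rw [dotR_eq_dotProduct, dotProduct_sub, dotProduct_e, hconst, Pi.sub_apply]
  linarith [h i hi]

lemma nonpos_of_forall_pow_mul_le {r δ B : ℝ} (hr : 1 < r) (h : ∀ s : ℕ, r ^ s * δ ≤ B) :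
    δ ≤ 0 := by
  by_contra! hδ
  obtain ⟨s, hs⟩ := pow_unbounded_of_one_lt (B / δ) hr
  exact (h s).not_gt ((div_lt_iff₀ hδ).1 hs)

section Atoms

variable {X : ℕ → Ω → (Fin N → ℝ)} {t : ℕ}

lemma mem_pathAtom_self (ω : Ω) : ω ∈ pathAtom X t ω := fun _ _ => rfl

lemma pathAtom_eq_of_mem {ω₀ ω₁ : Ω} (h : ω₁ ∈ pathAtom X t ω₀) :
    pathAtom X t ω₁ = pathAtom X t ω₀ := by
  ext ω
  exact ⟨fun hω s hs => (hω s hs).trans (h s hs), fun hω s hs => (hω s hs).trans (h s hs).symm⟩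

lemma pathAtom_succ (ω : Ω) :
    pathAtom X (t + 1) ω = pathAtom X t ω ∩ {ω' | X (t + 1) ω' = X (t + 1) ω} := by
  ext ω'
  simp only [pathAtom, Set.mem_inter_iff, Set.mem_ofPred_eq, Nat.le_succ_iff_eq_or_le]
  constructor
  · exact fun h => ⟨fun s hs => h s (Or.inr hs), h _ (Or.inl rfl)⟩
  · rintro ⟨h, hsucc⟩ s (rfl | hs)
    exacts [hsucc, h s hs]

lemma pathAtom_subset_of_measurableSet_natSigma {B : Set Ω}
    (hB : MeasurableSet[natSigma X t] B) {ω : Ω} (hω : ω ∈ B) : pathAtom X t ω ⊆ B := by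
  let saturated : MeasurableSpace Ω :=
    { MeasurableSet' := fun S => ∀ ω ∈ S, pathAtom X t ω ⊆ S
      measurableSet_empty := fun _ h => h.elim
      measurableSet_compl := fun S hS ω hω ω' hω' hS' =>
        hω (hS ω' hS' (pathAtom_eq_of_mem hω' ▸ mem_pathAtom_self ω))
      measurableSet_iUnion := fun S hS ω hω => by
        obtain ⟨i, hi⟩ := Set.mem_iUnion.1 hω
        exact (hS i ω hi).trans (Set.subset_iUnion S i) }
  have hle : natSigma X t ≤ saturated := by
    refine iSup₂_le fun s hs => ?_
    rintro S ⟨U, -, rfl⟩ ω hω ω' hω'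
    simpa only [Set.mem_preimage, hω' s hs] using hω
  exact hle B hB ω hω

lemma ae_of_ae_pathAtom (hX : BasisValued X) {P : Measure Ω} {Q : Ω → Prop}
    (h : ∀ ω₀, 0 < P (pathAtom X t ω₀) → ∀ᵐ ω ∂P, ω ∈ pathAtom X t ω₀ → Q ω) :
    ∀ᵐ ω ∂P, Q ω := by
  let path : Ω → Fin (t + 1) → Fin N → ℝ := fun ω s => X s ω
  have hatom (ω₀ : Ω) : path ⁻¹' {path ω₀} = pathAtom X t ω₀ := by
    ext ω
    simp only [Set.mem_preimage, Set.mem_singleton_iff, funext_iff, pathAtom, Set.mem_ofPred_eq,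
      path, Fin.forall_iff, Nat.lt_succ_iff]
  have hfin : (Set.range path).Finite :=
    (Set.Finite.pi fun _ => Set.finite_range (e N)).subset <| by
      rintro _ ⟨ω, rfl⟩ s -
      obtain ⟨i, hi⟩ := hX s ω
      exact ⟨i, hi.symm⟩
  have hcover : {ω | ¬Q ω} ⊆ ⋃ c ∈ Set.range path, path ⁻¹' {c} ∩ {ω | ¬Q ω} :=
    fun ω hω => Set.mem_biUnion (Set.mem_range_self ω) ⟨rfl, hω⟩
  refine measure_mono_null hcover ((measure_biUnion_null_iff hfin.countable).2 ?_)
  rintro _ ⟨ω₀, rfl⟩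
  rw [hatom]
  rcases eq_zero_or_pos (P (pathAtom X t ω₀)) with h0 | hpos
  · exact measure_mono_null Set.inter_subset_left h0
  · refine measure_mono_null (fun ω hω => ?_) (ae_iff.1 (h ω₀ hpos))
    exact fun hQ => hω.2 (hQ hω.1)

lemma ae_pos_pathAtom (hX : BasisValued X) {P : Measure Ω} :
    ∀ᵐ ω ∂P, 0 < P (pathAtom X t ω) :=
  ae_of_ae_pathAtom hX fun _ hpos => ae_of_all _ fun _ hω => pathAtom_eq_of_mem hω ▸ hpos

lemma exists_mem_of_ae_imp {P : Measure Ω} {S : Set Ω} (hS : 0 < P S) {Q : Ω → Prop}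
    (hQ : ∀ᵐ ω ∂P, ω ∈ S → Q ω) : ∃ ω ∈ S, Q ω := by
  by_contra! hc
  exact hS.ne' (measure_mono_null (fun ω (hω : ω ∈ S) (hQω : ω ∈ S → Q ω) => hc ω hω (hQω hω))
    (ae_iff.1 hQ))

end Atoms

section AtomValue

variable {P : Measure Ω} {X : ℕ → Ω → (Fin N → ℝ)} {t : ℕ} {β : Type*}

def IsAtomValue (P : Measure Ω) (X : ℕ → Ω → (Fin N → ℝ)) (t : ℕ) (ω₀ : Ω) (g : Ω → β)
    (c : β) : Prop :=
  0 < P (pathAtom X t ω₀) ∧ ∀ᵐ ω ∂P, ω ∈ pathAtom X t ω₀ → g ω = c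

lemma IsAtomValue.abs_le {g : Ω → ℝ} {ω₀ : Ω} {c D : ℝ} (hc : IsAtomValue P X t ω₀ g c)
    (hD : ∀ᵐ ω ∂P, |g ω| ≤ D) : |c| ≤ D := by
  obtain ⟨ω, hmem, hgω, hDω⟩ := exists_mem_of_ae_imp hc.1 <| by
    filter_upwards [hc.2, hD] with ω hgω hDω hmem using And.intro (hgω hmem) hDω
  exact hgω ▸ hDω

/-- The common value of `Y t` on the atoms of positive probability where `X t = e N k`
(arbitrary if there are none). -/
def stateValue (P : Measure Ω) (X : ℕ → Ω → (Fin N → ℝ)) (Y : ℕ → Ω → ℝ) (t : ℕ) (k : Fin N) :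
    ℝ :=
  Classical.epsilon fun y => ∃ ω₀, X t ω₀ = e N k ∧ IsAtomValue P X t ω₀ (Y t) y

end AtomValue

namespace IsCompletedNaturalFiltration

variable {P : Measure Ω} {X : ℕ → Ω → (Fin N → ℝ)} {F : Filtration ℕ mΩ} {t : ℕ}

lemma measurable_le (hF : IsCompletedNaturalFiltration P X F) {s : ℕ} (hst : s ≤ t) :
    Measurable[F t] (X s) := by
  intro U hU
  refine (hF t _).2 ⟨X s ⁻¹' U, ?_, by simp⟩
  exact le_biSup (fun s => MeasurableSpace.comap (X s) inferInstance) (show s ∈ Set.Iic t from hst)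
    _ ⟨U, hU, rfl⟩

lemma measurable (hF : IsCompletedNaturalFiltration P X F) (s : ℕ) : Measurable (X s) :=
  (hF.measurable_le le_rfl).mono (F.le s) le_rfl

lemma measurableSet_pathAtom (hF : IsCompletedNaturalFiltration P X F) (ω₀ : Ω) :
    MeasurableSet[F t] (pathAtom X t ω₀) := by
  have : pathAtom X t ω₀ = ⋂ s ∈ Set.Iic t, X s ⁻¹' {X s ω₀} := by
    ext; simp [pathAtom]
  rw [this]
  exact .biInter (Set.to_countable _) fun s hs =>
    hF.measurable_le hs (measurableSet_singleton _)

lemma ae_pathAtom_mem_or_notMem (hF : IsCompletedNaturalFiltration P X F)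
    {S : Set Ω} (hS : MeasurableSet[F t] S) (ω₀ : Ω) :
    (∀ᵐ ω ∂P, ω ∈ pathAtom X t ω₀ → ω ∈ S) ∨ (∀ᵐ ω ∂P, ω ∈ pathAtom X t ω₀ → ω ∉ S) := by
  obtain ⟨B, hB, hSB⟩ := (hF t S).1 hS
  have hSB : ∀ᵐ ω ∂P, ω ∈ S ↔ ω ∈ B := (measure_symmDiff_eq_zero_iff.1 hSB).mem_iff
  by_cases hmeet : (pathAtom X t ω₀ ∩ B).Nonempty
  · obtain ⟨ω₁, hω₁, hω₁B⟩ := hmeet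
    have hsub := pathAtom_subset_of_measurableSet_natSigma hB hω₁B
    rw [pathAtom_eq_of_mem hω₁] at hsub
    exact .inl (hSB.mono fun ω hω hmem => hω.2 (hsub hmem))
  · exact .inr (hSB.mono fun ω hω hmem hωS => hmeet ⟨ω, hmem, hω.1 hωS⟩)

lemma exists_isAtomValue (hF : IsCompletedNaturalFiltration P X F) {β : Type*}
    [MeasurableSpace β] [MeasurableSpace.CountablySeparated β] [Nonempty β] {g : Ω → β}
    (hg : Measurable[F t] g) {ω₀ : Ω} (hpos : 0 < P (pathAtom X t ω₀)) :
    ∃ c, IsAtomValue P X t ω₀ g c := by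
  have hC : MeasurableSet (pathAtom X t ω₀) := F.le t _ (hF.measurableSet_pathAtom ω₀)
  obtain ⟨c, hc⟩ := exists_eventuallyEq_const_of_forall_separating
    (l := ae (P.restrict (pathAtom X t ω₀))) (f := g) MeasurableSet fun U hU => by
      rw [ae_restrict_iff' hC, ae_restrict_iff' hC]
      exact hF.ae_pathAtom_mem_or_notMem (hg hU) ω₀
  exact ⟨c, hpos, (ae_restrict_iff' hC).1 hc⟩

end IsCompletedNaturalFiltration

section MarkovChain

variable {P : Measure Ω} {X : ℕ → Ω → (Fin N → ℝ)} {F : Filtration ℕ mΩ}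
  {A : ℕ → Matrix (Fin N) (Fin N) ℝ} {t : ℕ}

lemma BasisValued.apply_eq_indicator (hX : BasisValued X) (s : ℕ) (j : Fin N) :
    (fun ω => X s ω j) = {ω | X s ω = e N j}.indicator 1 := by
  ext ω
  obtain ⟨i, hi⟩ := hX s ω
  by_cases hij : i = j
  · simp [hi, hij, e]
  · simp only [Set.indicator_apply, Set.mem_ofPred_eq, hi, e_injective.eq_iff, hij, if_false]
    simp [e, Ne.symm hij]

lemma IsMarkovChain.ae_condExp_eq (hA : IsMarkovChain P F X A) :
    ∀ᵐ ω ∂P, ∀ i, (P[fun ω' => X (t + 1) ω' i|F t]) ω = (A t *ᵥ X t ω) i :=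
  ae_all_iff.2 (hA.2 t)

lemma IsMarkovChain.ae_Mdiff_eq (hA : IsMarkovChain P F X A) :
    ∀ᵐ ω ∂P, Mdiff P F X t ω = X (t + 1) ω - A t *ᵥ X t ω := by
  filter_upwards [hA.ae_condExp_eq (t := t)] with ω hω
  ext i
  simp [Mdiff, hω i]

lemma IsMarkovChain.isProbVec_mulVec (hA : IsMarkovChain P F X A) (hX : BasisValued X)
    (ω : Ω) : IsProbVec (A t *ᵥ X t ω) := by
  obtain ⟨k, hk⟩ := hX t ω
  exact hk ▸ (hA.1 t).isProbVec_mulVec (isProbVec_e k)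

variable [IsProbabilityMeasure P]

lemma measureReal_succ_inter_pathAtom (hX : BasisValued X)
    (hF : IsCompletedNaturalFiltration P X F) (hA : IsMarkovChain P F X A) (ω₀ : Ω) (j : Fin N) :
    P.real ({ω | X (t + 1) ω = e N j} ∩ pathAtom X t ω₀) =
      (A t *ᵥ X t ω₀) j * P.real (pathAtom X t ω₀) := by
  have hCF := hF.measurableSet_pathAtom (t := t) ω₀
  have hC : MeasurableSet (pathAtom X t ω₀) := F.le t _ hCF
  have hS : MeasurableSet {ω | X (t + 1) ω = e N j} := hF.measurable _ (measurableSet_singleton _)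
  have hint : Integrable (fun ω => X (t + 1) ω j) P := by
    rw [hX.apply_eq_indicator]
    exact (integrable_const 1).indicator hS
  calc P.real ({ω | X (t + 1) ω = e N j} ∩ pathAtom X t ω₀)
      = ∫ ω in pathAtom X t ω₀, X (t + 1) ω j ∂P := by
        rw [hX.apply_eq_indicator, integral_indicator_one hS, measureReal_restrict_apply hS]
    _ = ∫ ω in pathAtom X t ω₀, (P[fun ω' => X (t + 1) ω' j|F t]) ω ∂P :=
        (setIntegral_condExp (F.le t) hint hCF).symm
    _ = ∫ _ in pathAtom X t ω₀, (A t *ᵥ X t ω₀) j ∂P := by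
        refine setIntegral_congr_ae hC ?_
        filter_upwards [hA.ae_condExp_eq] with ω hω hmem
        rw [hω j, hmem t le_rfl]
    _ = (A t *ᵥ X t ω₀) j * P.real (pathAtom X t ω₀) := by
        rw [setIntegral_const, smul_eq_mul, mul_comm]

lemma measure_succ_inter_pathAtom_pos_iff (hX : BasisValued X)
    (hF : IsCompletedNaturalFiltration P X F) (hA : IsMarkovChain P F X A) {ω₀ : Ω}
    (hpos : 0 < P (pathAtom X t ω₀)) (j : Fin N) :
    0 < P ({ω | X (t + 1) ω = e N j} ∩ pathAtom X t ω₀) ↔ 0 < (A t *ᵥ X t ω₀) j := by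
  have hreal {S : Set Ω} : 0 < P S ↔ 0 < P.real S := by
    rw [measureReal_def, ENNReal.toReal_pos_iff, and_iff_left (measure_lt_top P S)]
  rw [hreal, measureReal_succ_inter_pathAtom hX hF hA, mul_pos_iff_of_pos_right (hreal.1 hpos)]

lemma ae_transition_pos (hX : BasisValued X) (hF : IsCompletedNaturalFiltration P X F)
    (hA : IsMarkovChain P F X A) :
    ∀ᵐ ω ∂P, ∀ j, X (t + 1) ω = e N j → 0 < (A t *ᵥ X t ω) j := by
  filter_upwards [ae_pos_pathAtom (t := t + 1) hX] with ω hpos j hj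
  rw [pathAtom_succ, hj, Set.inter_comm] at hpos
  exact (measure_succ_inter_pathAtom_pos_iff hX hF hA
    (hpos.trans_le (measure_mono Set.inter_subset_right)) j).1 hpos

end MarkovChain

section Comparison

variable {P : Measure Ω} [IsProbabilityMeasure P] {X : ℕ → Ω → (Fin N → ℝ)} {F : Filtration ℕ mΩ}
  {A : ℕ → Matrix (Fin N) (Fin N) ℝ} {t : ℕ}

lemma ae_exists_minJump_eq (hX : BasisValued X) (hF : IsCompletedNaturalFiltration P X F)
    (hA : IsMarkovChain P F X A) {ω₀ : Ω} (hpos : 0 < P (pathAtom X t ω₀)) (z z' : Fin N → ℝ) :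
    ∀ᵐ ω ∂P, ω ∈ pathAtom X t ω₀ → ∃ i, 0 < (A t *ᵥ X t ω₀) i ∧
      minJump P F X t ω₀ z z' ω = dotR (z - z') (e N i - A t *ᵥ X t ω₀) := by
  filter_upwards [hA.ae_condExp_eq (t := t)] with ω hω hmem
  have hset : {r : ℝ | ∃ i : Fin N,
      0 < P ({ω' | X (t + 1) ω' = e N i} ∩ pathAtom X t ω₀) ∧
      r = dotR (z - z') (fun j => e N i j - (P[fun ω'' => X (t + 1) ω'' j|F t]) ω)} =
      (fun i => dotR (z - z') (e N i - A t *ᵥ X t ω₀)) '' {i | 0 < (A t *ᵥ X t ω₀) i} := by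
    ext r
    simp only [measure_succ_inter_pathAtom_pos_iff hX hF hA hpos, hω, hmem t le_rfl]
    simp [eq_comm, Pi.sub_def]
  have hne : Set.Nonempty {i | 0 < (A t *ᵥ X t ω₀) i} := (hA.isProbVec_mulVec hX ω₀).exists_pos
  obtain ⟨i, hi, hmin⟩ : minJump P F X t ω₀ z z' ω ∈ _ := by
    rw [minJump, hset]
    exact (hne.image _).csInf_mem (Set.toFinite _)
  exact ⟨i, hi, hmin.symm⟩

variable {ftil : (Fin N → ℝ) → ℕ → (Fin N → ℝ) → ℝ}

lemma ComparisonCondition.exists_sub_le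
    (hfComp : ComparisonCondition P F X fun ω t _ z => ftil (X t ω) t z) (hX : BasisValued X)
    (hF : IsCompletedNaturalFiltration P X F) (hA : IsMarkovChain P F X A) {ω₀ : Ω}
    (hpos : 0 < P (pathAtom X t ω₀)) (z z' : Fin N → ℝ) :
    ∃ i, 0 < (A t *ᵥ X t ω₀) i ∧
      ftil (X t ω₀) t z - ftil (X t ω₀) t z' ≤ dotR (z - z') (e N i - A t *ᵥ X t ω₀) := by
  obtain ⟨ω, hmem, hcomp, i, hi, hmin⟩ := exists_mem_of_ae_imp hpos <| by
    filter_upwards [hfComp t 0 z' z ω₀ hpos, ae_exists_minJump_eq hX hF hA hpos z' z]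
      with ω hcomp hmin hmem using And.intro (hcomp hmem) (hmin hmem)
  have hswap : dotR (z - z') (e N i - A t *ᵥ X t ω₀) =
      -dotR (z' - z) (e N i - A t *ᵥ X t ω₀) := by
    rw [dotR_eq_dotProduct, dotR_eq_dotProduct, ← neg_dotProduct, neg_sub]
  simp only [hmem t le_rfl] at hcomp
  refine ⟨i, hi, ?_⟩
  by_cases h0 : minJump P F X t ω₀ z' z ω = 0
  · linarith [hcomp.1 h0, hmin ▸ h0]
  · linarith [hmin ▸ hcomp.2 h0]

lemma ComparisonCondition.eq_of_dotR_eq_zero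
    (hfComp : ComparisonCondition P F X fun ω t _ z => ftil (X t ω) t z) (hX : BasisValued X)
    (hF : IsCompletedNaturalFiltration P X F) (hA : IsMarkovChain P F X A) {ω₀ : Ω}
    (hpos : 0 < P (pathAtom X t ω₀)) {z z' : Fin N → ℝ}
    (h : ∀ i, 0 < (A t *ᵥ X t ω₀) i → dotR (z - z') (e N i - A t *ᵥ X t ω₀) = 0) :
    ftil (X t ω₀) t z = ftil (X t ω₀) t z' := by
  obtain ⟨i, hi, hle⟩ := hfComp.exists_sub_le hX hF hA hpos z z'
  obtain ⟨i', hi', hle'⟩ := hfComp.exists_sub_le hX hF hA hpos z' z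
  have h' : dotR (z' - z) (e N i' - A t *ᵥ X t ω₀) = 0 := by
    rw [dotR_eq_dotProduct, ← neg_sub, neg_dotProduct, ← dotR_eq_dotProduct, h i' hi', neg_zero]
  linarith [h i hi]

end Comparison

namespace SolvesDiscountedBSDE

variable {P : Measure Ω} [IsProbabilityMeasure P] {X : ℕ → Ω → (Fin N → ℝ)} {F : Filtration ℕ mΩ}
  {A : ℕ → Matrix (Fin N) (Fin N) ℝ} {t : ℕ}
  {α : ℝ} {ftil : (Fin N → ℝ) → ℕ → (Fin N → ℝ) → ℝ} {Y : ℕ → Ω → ℝ} {Z : ℕ → Ω → Fin N → ℝ}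

lemma exists_isAtomValue_succ
    (hYZ : SolvesDiscountedBSDE P F X α (fun ω t z => ftil (X t ω) t z) Y Z)
    (hX : BasisValued X) (hF : IsCompletedNaturalFiltration P X F) (hA : IsMarkovChain P F X A)
    {ω₀ : Ω} {y : ℝ} {z : Fin N → ℝ} (hy : IsAtomValue P X t ω₀ (Y t) y)
    (hz : IsAtomValue P X t ω₀ (Z t) z) {j : Fin N} (hj : 0 < (A t *ᵥ X t ω₀) j) :
    ∃ ω₁, X (t + 1) ω₁ = e N j ∧ IsAtomValue P X (t + 1) ω₁ (Y (t + 1))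
      ((1 + α) * y - ftil (X t ω₀) t z + dotR z (e N j - A t *ᵥ X t ω₀)) := by
  have hS : 0 < P ({ω | X (t + 1) ω = e N j} ∩ pathAtom X t ω₀) :=
    (measure_succ_inter_pathAtom_pos_iff hX hF hA hy.1 j).2 hj
  obtain ⟨ω₁, hω₁j, hω₁⟩ := nonempty_of_measure_ne_zero hS.ne'
  have hatom : pathAtom X (t + 1) ω₁ = {ω | X (t + 1) ω = e N j} ∩ pathAtom X t ω₀ := by
    rw [pathAtom_succ, pathAtom_eq_of_mem hω₁, show X (t + 1) ω₁ = e N j from hω₁j,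
      Set.inter_comm]
  refine ⟨ω₁, hω₁j, hatom ▸ hS, ?_⟩
  filter_upwards [hYZ.2.2 t (t + 1) t.lt_succ_self, hy.2, hz.2, hA.ae_Mdiff_eq (t := t)]
    with ω hbsde hyω hzω hM hmem
  rw [hatom] at hmem
  simp only [Nat.Ico_succ_singleton, Finset.sum_singleton] at hbsde
  rw [hbsde, hyω hmem.2, hzω hmem.2, hM, hmem.2 t le_rfl, show X (t + 1) ω = e N j from hmem.1]
  ring

lemma exists_gap_succ
    (hYZ : SolvesDiscountedBSDE P F X α (fun ω t z => ftil (X t ω) t z) Y Z)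
    (hX : BasisValued X) (hF : IsCompletedNaturalFiltration P X F) (hA : IsMarkovChain P F X A)
    (hfComp : ComparisonCondition P F X fun ω t _ z => ftil (X t ω) t z)
    {ω₀ ω₁ : Ω} {y₀ y₁ : ℝ} (hy₀ : IsAtomValue P X t ω₀ (Y t) y₀)
    (hy₁ : IsAtomValue P X t ω₁ (Y t) y₁) (hX₀₁ : X t ω₀ = X t ω₁) :
    ∃ ω₀' ω₁' y₀' y₁', X (t + 1) ω₀' = X (t + 1) ω₁' ∧
      IsAtomValue P X (t + 1) ω₀' (Y (t + 1)) y₀' ∧ IsAtomValue P X (t + 1) ω₁' (Y (t + 1)) y₁' ∧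
      (1 + α) * (y₀ - y₁) ≤ y₀' - y₁' := by
  obtain ⟨z₀, hz₀⟩ := hF.exists_isAtomValue (hYZ.2.1 t) hy₀.1
  obtain ⟨z₁, hz₁⟩ := hF.exists_isAtomValue (hYZ.2.1 t) hy₁.1
  obtain ⟨j, hj, hle⟩ := hfComp.exists_sub_le hX hF hA hy₀.1 z₀ z₁
  obtain ⟨ω₀', hj₀, hy₀'⟩ := hYZ.exists_isAtomValue_succ hX hF hA hy₀ hz₀ hj
  obtain ⟨ω₁', hj₁, hy₁'⟩ := hYZ.exists_isAtomValue_succ hX hF hA hy₁ hz₁ (hX₀₁ ▸ hj)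
  refine ⟨ω₀', ω₁', _, _, hj₀.trans hj₁.symm, hy₀', hy₁', ?_⟩
  rw [← hX₀₁]
  rw [dotR_eq_dotProduct, sub_dotProduct] at hle
  simp only [dotR_eq_dotProduct]
  linarith

lemma exists_gap (hYZ : SolvesDiscountedBSDE P F X α (fun ω t z => ftil (X t ω) t z) Y Z)
    (hX : BasisValued X) (hF : IsCompletedNaturalFiltration P X F) (hA : IsMarkovChain P F X A)
    (hfComp : ComparisonCondition P F X fun ω t _ z => ftil (X t ω) t z) (hα : 0 < α)
    {ω₀ ω₁ : Ω} {y₀ y₁ : ℝ} (hy₀ : IsAtomValue P X t ω₀ (Y t) y₀)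
    (hy₁ : IsAtomValue P X t ω₁ (Y t) y₁) (hX₀₁ : X t ω₀ = X t ω₁) (s : ℕ) :
    ∃ ω₀' ω₁' y₀' y₁', X (t + s) ω₀' = X (t + s) ω₁' ∧
      IsAtomValue P X (t + s) ω₀' (Y (t + s)) y₀' ∧ IsAtomValue P X (t + s) ω₁' (Y (t + s)) y₁' ∧
      (1 + α) ^ s * (y₀ - y₁) ≤ y₀' - y₁' := by
  induction s with
  | zero => exact ⟨ω₀, ω₁, y₀, y₁, hX₀₁, hy₀, hy₁, by simp⟩
  | succ s ih =>
    obtain ⟨_, _, _, _, hX', hy₀', hy₁', hgap⟩ := ih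
    obtain ⟨ω₀'', ω₁'', y₀'', y₁'', hX'', hy₀'', hy₁'', hgap'⟩ :=
      hYZ.exists_gap_succ hX hF hA hfComp hy₀' hy₁' hX'
    refine ⟨ω₀'', ω₁'', y₀'', y₁'', hX'', hy₀'', hy₁'', ?_⟩
    calc (1 + α) ^ (s + 1) * (y₀ - y₁) = (1 + α) * ((1 + α) ^ s * (y₀ - y₁)) := by ring
      _ ≤ _ := mul_le_mul_of_nonneg_left hgap (by linarith)
      _ ≤ _ := hgap'

lemma isAtomValue_unique
    (hYZ : SolvesDiscountedBSDE P F X α (fun ω t z => ftil (X t ω) t z) Y Z)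
    (hX : BasisValued X) (hF : IsCompletedNaturalFiltration P X F) (hA : IsMarkovChain P F X A)
    (hfComp : ComparisonCondition P F X fun ω t _ z => ftil (X t ω) t z) (hα : 0 < α)
    (hYbdd : ∃ D : ℝ, ∀ t : ℕ, ∀ᵐ ω ∂P, |Y t ω| ≤ D)
    {ω₀ ω₁ : Ω} {y₀ y₁ : ℝ} (hy₀ : IsAtomValue P X t ω₀ (Y t) y₀)
    (hy₁ : IsAtomValue P X t ω₁ (Y t) y₁) (hX₀₁ : X t ω₀ = X t ω₁) : y₀ = y₁ := by
  wlog hle : y₁ ≤ y₀ generalizing ω₀ ω₁ y₀ y₁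
  · exact (this hy₁ hy₀ hX₀₁.symm (le_of_not_ge hle)).symm
  obtain ⟨D, hD⟩ := hYbdd
  suffices y₀ - y₁ ≤ 0 by linarith
  refine nonpos_of_forall_pow_mul_le (B := 2 * D) (by linarith : 1 < 1 + α) fun s => ?_
  obtain ⟨_, _, _, _, -, hy₀', hy₁', hgap⟩ := hYZ.exists_gap hX hF hA hfComp hα hy₀ hy₁ hX₀₁ s
  linarith [abs_le.1 (hy₀'.abs_le (hD (t + s))), abs_le.1 (hy₁'.abs_le (hD (t + s)))]

lemma stateValue_eq (hYZ : SolvesDiscountedBSDE P F X α (fun ω t z => ftil (X t ω) t z) Y Z)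
    (hX : BasisValued X) (hF : IsCompletedNaturalFiltration P X F) (hA : IsMarkovChain P F X A)
    (hfComp : ComparisonCondition P F X fun ω t _ z => ftil (X t ω) t z) (hα : 0 < α)
    (hYbdd : ∃ D : ℝ, ∀ t : ℕ, ∀ᵐ ω ∂P, |Y t ω| ≤ D)
    {ω₀ : Ω} {k : Fin N} {y : ℝ} (hk : X t ω₀ = e N k) (hy : IsAtomValue P X t ω₀ (Y t) y) :
    stateValue P X Y t k = y := by
  obtain ⟨ω₁, hk₁, hy₁⟩ := Classical.epsilon_spec
    (p := fun y => ∃ ω₀, X t ω₀ = e N k ∧ IsAtomValue P X t ω₀ (Y t) y) ⟨y, ω₀, hk, hy⟩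
  exact hYZ.isAtomValue_unique hX hF hA hfComp hα hYbdd hy₁ hy (hk₁.trans hk.symm)

lemma stateValue_succ_sub_eq
    (hYZ : SolvesDiscountedBSDE P F X α (fun ω t z => ftil (X t ω) t z) Y Z)
    (hX : BasisValued X) (hF : IsCompletedNaturalFiltration P X F) (hA : IsMarkovChain P F X A)
    (hfComp : ComparisonCondition P F X fun ω t _ z => ftil (X t ω) t z) (hα : 0 < α)
    (hYbdd : ∃ D : ℝ, ∀ t : ℕ, ∀ᵐ ω ∂P, |Y t ω| ≤ D)
    {ω₀ : Ω} {y : ℝ} {z : Fin N → ℝ} (hy : IsAtomValue P X t ω₀ (Y t) y)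
    (hz : IsAtomValue P X t ω₀ (Z t) z) {j : Fin N} (hj : 0 < (A t *ᵥ X t ω₀) j) :
    stateValue P X Y (t + 1) j - z j =
      (1 + α) * y - ftil (X t ω₀) t z - z ⬝ᵥ (A t *ᵥ X t ω₀) := by
  obtain ⟨ω₁, hj₁, hy₁⟩ := hYZ.exists_isAtomValue_succ hX hF hA hy hz hj
  rw [hYZ.stateValue_eq hX hF hA hfComp hα hYbdd hj₁ hy₁, dotR_eq_dotProduct, dotProduct_sub,
    dotProduct_e]
  ring

lemma stateValue_equation_on_atom
    (hYZ : SolvesDiscountedBSDE P F X α (fun ω t z => ftil (X t ω) t z) Y Z)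
    (hX : BasisValued X) (hF : IsCompletedNaturalFiltration P X F) (hA : IsMarkovChain P F X A)
    (hfComp : ComparisonCondition P F X fun ω t _ z => ftil (X t ω) t z) (hα : 0 < α)
    (hYbdd : ∃ D : ℝ, ∀ t : ℕ, ∀ᵐ ω ∂P, |Y t ω| ≤ D)
    {ω₀ : Ω} {y : ℝ} {z : Fin N → ℝ} (hy : IsAtomValue P X t ω₀ (Y t) y)
    (hz : IsAtomValue P X t ω₀ (Z t) z) :
    (1 + α) * y - ftil (X t ω₀) t (stateValue P X Y (t + 1)) -
      dotR (stateValue P X Y (t + 1)) (A t *ᵥ X t ω₀) = 0 := by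
  have hsucc := fun j => hYZ.stateValue_succ_sub_eq hX hF hA hfComp hα hYbdd hy hz (j := j)
  have hprob := hA.isProbVec_mulVec hX (t := t) ω₀
  have hf := hfComp.eq_of_dotR_eq_zero hX hF hA hy.1 fun i hi => hprob.dotR_sub_eq_zero hsucc hi
  have hconst := hprob.dotProduct_eq_of_eq_on_support (d := stateValue P X Y (t + 1) - z) hsucc
  rw [sub_dotProduct] at hconst
  rw [← hf, dotR_eq_dotProduct]
  linarith

lemma ae_eq_stateValue (hYZ : SolvesDiscountedBSDE P F X α (fun ω t z => ftil (X t ω) t z) Y Z)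
    (hX : BasisValued X) (hF : IsCompletedNaturalFiltration P X F) (hA : IsMarkovChain P F X A)
    (hfComp : ComparisonCondition P F X fun ω t _ z => ftil (X t ω) t z) (hα : 0 < α)
    (hYbdd : ∃ D : ℝ, ∀ t : ℕ, ∀ᵐ ω ∂P, |Y t ω| ≤ D) :
    Y t =ᵐ[P] fun ω => dotR (stateValue P X Y t) (X t ω) := by
  refine ae_of_ae_pathAtom (t := t) hX fun ω₀ hpos => ?_
  obtain ⟨y, hy⟩ := hF.exists_isAtomValue (hYZ.1 t) hpos
  obtain ⟨k, hk⟩ := hX t ω₀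
  filter_upwards [hy.2] with ω hyω hmem
  rw [hyω hmem, hmem t le_rfl, hk, dotR_eq_dotProduct, dotProduct_e,
    hYZ.stateValue_eq hX hF hA hfComp hα hYbdd hk hy]

lemma equivMt_stateValue_succ
    (hYZ : SolvesDiscountedBSDE P F X α (fun ω t z => ftil (X t ω) t z) Y Z)
    (hX : BasisValued X) (hF : IsCompletedNaturalFiltration P X F) (hA : IsMarkovChain P F X A)
    (hfComp : ComparisonCondition P F X fun ω t _ z => ftil (X t ω) t z) (hα : 0 < α)
    (hYbdd : ∃ D : ℝ, ∀ t : ℕ, ∀ᵐ ω ∂P, |Y t ω| ≤ D) :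
    equivMt P F X t (Z t) fun _ => stateValue P X Y (t + 1) := by
  have hzero : (fun ω => dotR (Z t ω - stateValue P X Y (t + 1)) (Mdiff P F X t ω) ^ 2)
      =ᵐ[P] 0 := by
    refine ae_of_ae_pathAtom (t := t) hX fun ω₀ hpos => ?_
    obtain ⟨y, hy⟩ := hF.exists_isAtomValue (hYZ.1 t) hpos
    obtain ⟨z, hz⟩ := hF.exists_isAtomValue (hYZ.2.1 t) hpos
    filter_upwards [hz.2, hA.ae_Mdiff_eq (t := t), ae_transition_pos (t := t) hX hF hA]
      with ω hzω hM htr hmem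
    obtain ⟨j, hj⟩ := hX (t + 1) ω
    have hXt : X t ω = X t ω₀ := hmem t le_rfl
    rw [hXt] at htr hM
    rw [hzω hmem, hM, hj, (hA.isProbVec_mulVec hX ω₀).dotR_sub_eq_zero
      (fun _ => hYZ.stateValue_succ_sub_eq hX hF hA hfComp hα hYbdd hy hz) (htr j hj)]
    simp
  refine (condExp_congr_ae hzero).trans ?_
  rw [condExp_zero]

lemma stateValue_equation
    (hYZ : SolvesDiscountedBSDE P F X α (fun ω t z => ftil (X t ω) t z) Y Z)
    (hX : BasisValued X) (hF : IsCompletedNaturalFiltration P X F) (hA : IsMarkovChain P F X A)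
    (hfComp : ComparisonCondition P F X fun ω t _ z => ftil (X t ω) t z) (hα : 0 < α)
    (hYbdd : ∃ D : ℝ, ∀ t : ℕ, ∀ᵐ ω ∂P, |Y t ω| ≤ D) {k : Fin N}
    (hk : 0 < P {ω | X t ω = e N k}) :
    (1 + α) * stateValue P X Y t k - ftil (e N k) t (stateValue P X Y (t + 1)) -
      dotR (stateValue P X Y (t + 1)) (A t *ᵥ e N k) = 0 := by
  obtain ⟨ω₀, hω₀k, hpos⟩ := exists_mem_of_ae_imp hk
    ((ae_pos_pathAtom (t := t) hX).mono fun _ h _ => h)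
  obtain ⟨y, hy⟩ := hF.exists_isAtomValue (hYZ.1 t) hpos
  obtain ⟨z, hz⟩ := hF.exists_isAtomValue (hYZ.2.1 t) hpos
  rw [hYZ.stateValue_eq hX hF hA hfComp hα hYbdd hω₀k hy, ← show X t ω₀ = e N k from hω₀k]
  exact hYZ.stateValue_equation_on_atom hX hF hA hfComp hα hYbdd hy hz

end SolvesDiscountedBSDE

theorem markovian_discounted_solution_general
    {Ω : Type*} {mΩ : MeasurableSpace Ω} {N : ℕ}
    (P : Measure Ω) [IsProbabilityMeasure P] (F : Filtration ℕ mΩ)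
    (X : ℕ → Ω → (Fin N → ℝ)) (hX : BasisValued X)
    (hF : IsCompletedNaturalFiltration P X F)
    (A : ℕ → Matrix (Fin N) (Fin N) ℝ) (hA : IsMarkovChain P F X A)
    (α : ℝ) (hα : 0 < α)
    (ftil : (Fin N → ℝ) → ℕ → (Fin N → ℝ) → ℝ)
    (hfComp : ComparisonCondition P F X fun ω t _ z => ftil (X t ω) t z)
    (Y : ℕ → Ω → ℝ) (Z : ℕ → Ω → Fin N → ℝ)
    (hYZ : SolvesDiscountedBSDE P F X α (fun ω t z => ftil (X t ω) t z) Y Z)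
    (hYbdd : ∃ D : ℝ, ∀ t : ℕ, ∀ᵐ ω ∂P, |Y t ω| ≤ D) :
    ∃ v : ℕ → Fin N → ℝ,
      (∀ t : ℕ, Y t =ᵐ[P] fun ω => dotR (v t) (X t ω)) ∧
      (∀ t : ℕ, equivMt P F X t (Z t) fun _ => v (t + 1)) ∧
      ∀ (t : ℕ) (k : Fin N), 0 < P {ω | X t ω = e N k} →
        (1 + α) * v t k - ftil (e N k) t (v (t + 1)) -
          dotR (v (t + 1)) ((A t).mulVec (e N k)) = 0 :=
  ⟨stateValue P X Y, fun _ => hYZ.ae_eq_stateValue hX hF hA hfComp hα hYbdd,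
    fun _ => hYZ.equivMt_stateValue_succ hX hF hA hfComp hα hYbdd,
    fun _ _ hk => hYZ.stateValue_equation hX hF hA hfComp hα hYbdd hk⟩

/-- **Markovian structure of discounted BSDE solutions.** -/
theorem markovian_discounted_solution
    {Ω : Type*} {mΩ : MeasurableSpace Ω} {N : ℕ}
    (P : Measure Ω) [IsProbabilityMeasure P] (F : Filtration ℕ mΩ)
    (X : ℕ → Ω → (Fin N → ℝ)) (hX : BasisValued X)
    (hF : IsCompletedNaturalFiltration P X F)
    (A : ℕ → Matrix (Fin N) (Fin N) ℝ) (hA : IsMarkovChain P F X A)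
    (α : ℝ) (hα : 0 < α)
    (ftil : (Fin N → ℝ) → ℕ → (Fin N → ℝ) → ℝ)
    (L : ℝ) (hL : 0 < L)
    (hfLip : DriverLipschitzNoY P F X L fun ω t z => ftil (X t ω) t z)
    (hfComp : ComparisonCondition P F X fun ω t _ z => ftil (X t ω) t z)
    (C : ℝ) (hC : 0 < C) (hfBdd : ∀ (t : ℕ) (ω : Ω), |ftil (X t ω) t 0| ≤ C)
    (Y : ℕ → Ω → ℝ) (Z : ℕ → Ω → Fin N → ℝ)
    (hYZ : SolvesDiscountedBSDE P F X α (fun ω t z => ftil (X t ω) t z) Y Z)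
    (hYbdd : ∃ D : ℝ, ∀ t : ℕ, ∀ᵐ ω ∂P, |Y t ω| ≤ D) :
    ∃ v : ℕ → Fin N → ℝ,
      (∀ t : ℕ, Y t =ᵐ[P] fun ω => dotR (v t) (X t ω)) ∧
      (∀ t : ℕ, equivMt P F X t (Z t) fun _ => v (t + 1)) ∧
      ∀ (t : ℕ) (k : Fin N), 0 < P {ω | X t ω = e N k} →
        (1 + α) * v t k - ftil (e N k) t (v (t + 1)) -
          dotR (v (t + 1)) ((A t).mulVec (e N k)) = 0 :=
  markovian_discounted_solution_general P F X hX hF A hA α hα ftil hfComp Y Z hYZ hYbdd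

end DiscreteEBSDE
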